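/- arXiv:2005.04256 — 5 statements merged into one kernel-verified Lean document; each statement's English description precedes it below -/
import Mathlib

section
/- Let W be a finite set of vectors in ℝⁿ whose first n−k coordinates lie in {−1, 1}, whose last k coordinates lie in [−(n−k), n−k], and such that any two distinct vectors of W differ in at least one of the first n−k coordinates. Then there exists a subset W' ⊆ W with |W'| ≥ |W| / (n−k)^k that is 2-equilateral in the sup-norm. -/
/-- Key interval lemma: if `v ∈ [-c, c]` then its class `min ⌊(v+c)/2⌋ (c-1)` pins
`(v+c)/2` into an interval of length one. -/
lemma class_bound (c : ℕ) (hc : 0 < c) (v : ℝ) (h1 : -(c : ℝ) ≤ v) (h2 : v ≤ c) :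
    ((min ⌊(v + c) / 2⌋₊ (c - 1) : ℕ) : ℝ) ≤ (v + c) / 2 ∧
      (v + c) / 2 ≤ (min ⌊(v + c) / 2⌋₊ (c - 1) : ℕ) + 1 := by
  have hv0 : (0 : ℝ) ≤ (v + c) / 2 := by linarith
  constructor
  · calc ((min ⌊(v + c) / 2⌋₊ (c - 1) : ℕ) : ℝ) ≤ (⌊(v + c) / 2⌋₊ : ℝ) := by
          exact_mod_cast Nat.cast_le.mpr (min_le_left _ _)
      _ ≤ (v + c) / 2 := Nat.floor_le hv0
  · rcases le_or_gt ⌊(v + c) / 2⌋₊ (c - 1) with h | h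
    · rw [min_eq_left h]
      have := Nat.lt_floor_add_one ((v + c) / 2)
      linarith
    · rw [min_eq_right h.le]
      have : ((c - 1 : ℕ) : ℝ) + 1 = c := by
        have : (c - 1) + 1 = c := by omega
        exact_mod_cast congrArg (Nat.cast : ℕ → ℝ) this
      rw [this]; linarith

lemma class_dist (c : ℕ) (hc : 0 < c) (v w : ℝ) (hv1 : -(c : ℝ) ≤ v) (hv2 : v ≤ c)
    (hw1 : -(c : ℝ) ≤ w) (hw2 : w ≤ c)
    (h : min ⌊(v + c) / 2⌋₊ (c - 1) = min ⌊(w + c) / 2⌋₊ (c - 1)) : |v - w| ≤ 2 := by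
  obtain ⟨a1, a2⟩ := class_bound c hc v hv1 hv2
  obtain ⟨b1, b2⟩ := class_bound c hc w hw1 hw2
  rw [h] at a1 a2
  rw [abs_le]; constructor <;> linarith

theorem stmt1 (n k : ℕ) (hkn : k ≤ n) (W : Finset (Fin n → ℝ))
    (h1 : ∀ w ∈ W, ∀ i : Fin n, (i : ℕ) < n - k → w i = 1 ∨ w i = -1)
    (h2 : ∀ w ∈ W, ∀ i : Fin n, n - k ≤ (i : ℕ) → |w i| ≤ (n : ℝ) - k)
    (h3 : ∀ w ∈ W, ∀ w' ∈ W, w ≠ w' → ∃ i : Fin n, (i : ℕ) < n - k ∧ w i ≠ w' i) :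
    ∃ W' ⊆ W, (W.card : ℝ) / ((n : ℝ) - k) ^ k ≤ W'.card ∧
      ∀ x ∈ W', ∀ y ∈ W', x ≠ y → dist x y = 2 := by
  rcases eq_or_lt_of_le hkn with heq | hlt
  · -- degenerate case k = n : W has no pair of distinct elements
    subst heq
    refine ⟨W, Finset.Subset.refl _, ?_, ?_⟩
    · rcases Nat.eq_zero_or_pos k with h0 | h0
      · subst h0; simp
      · rw [sub_self, zero_pow (by omega), div_zero]
        exact Nat.cast_nonneg _
    · intro x hx y hy hxy
      obtain ⟨i, hi, _⟩ := h3 x hx y hy hxy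
      omega
  · -- main case k < n
    set c : ℕ := n - k with hc_def
    have hc : 0 < c := by omega
    have hC : ((n : ℝ) - k) = (c : ℝ) := by
      rw [hc_def]; push_cast [Nat.cast_sub hkn]; ring
    -- the classification map
    let f : (Fin n → ℝ) → (Fin k → Fin c) := fun w j =>
      ⟨min ⌊(w ⟨c + j, by omega⟩ + c) / 2⌋₊ (c - 1),
        lt_of_le_of_lt (min_le_right _ _) (by omega)⟩
    haveI : Nonempty (Fin c) := ⟨⟨0, hc⟩⟩
    obtain ⟨a, -, ha⟩ := Finset.exists_max_image Finset.univ
      (fun a : Fin k → Fin c => (W.filter (fun w => f w = a)).card) Finset.univ_nonempty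
    set W' : Finset (Fin n → ℝ) := W.filter (fun w => f w = a) with hW'
    have hsub : W' ⊆ W := Finset.filter_subset _ _
    have hsum : W.card = ∑ b : Fin k → Fin c, (W.filter (fun w => f w = b)).card :=
      Finset.card_eq_sum_card_fiberwise (fun w _ => Finset.mem_univ _)
    have hcard : W.card ≤ c ^ k * W'.card := by
      rw [hsum]
      calc ∑ b : Fin k → Fin c, (W.filter (fun w => f w = b)).card
          ≤ ∑ _b : Fin k → Fin c, W'.card :=
            Finset.sum_le_sum (fun b _ => ha b (Finset.mem_univ b))
        _ = Fintype.card (Fin k → Fin c) * W'.card := by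
            rw [Finset.sum_const, Finset.card_univ, smul_eq_mul]
        _ = c ^ k * W'.card := by simp [Fintype.card_fun]
    refine ⟨W', hsub, ?_, ?_⟩
    · rw [hC, div_le_iff₀ (by positivity)]
      calc (W.card : ℝ) ≤ (c : ℝ) ^ k * W'.card := by exact_mod_cast hcard
        _ = (W'.card : ℝ) * (c : ℝ) ^ k := by ring
    · intro x hx y hy hxy
      have hxW : x ∈ W := hsub hx
      have hyW : y ∈ W := hsub hy
      have hfx : f x = a := (Finset.mem_filter.mp hx).2
      have hfy : f y = a := (Finset.mem_filter.mp hy).2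
      apply le_antisymm
      · rw [dist_pi_le_iff (by norm_num)]
        intro i
        rcases lt_or_ge (i : ℕ) c with hi | hi
        · rcases h1 x hxW i hi with h | h <;> rcases h1 y hyW i hi with h' | h' <;>
            rw [Real.dist_eq, h, h'] <;> norm_num
        · -- last coordinates
          set j : Fin k := ⟨(i : ℕ) - c, by omega⟩ with hj
          have hij : (⟨c + (j : ℕ), by omega⟩ : Fin n) = i := by
            apply Fin.ext; simp [hj]; omega
          have hfj : f x j = f y j := by rw [hfx, hfy]
          have hmin : min ⌊(x i + c) / 2⌋₊ (c - 1) = min ⌊(y i + c) / 2⌋₊ (c - 1) := by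
            have := congrArg Fin.val hfj
            simpa [f, hij] using this
          have hxb := h2 x hxW i hi
          have hyb := h2 y hyW i hi
          rw [hC, abs_le] at hxb hyb
          rw [Real.dist_eq]
          exact class_dist c hc (x i) (y i) hxb.1 hxb.2 hyb.1 hyb.2 hmin
      · obtain ⟨i, hi, hne⟩ := h3 x hxW y hyW hxy
        calc (2 : ℝ) = dist (x i) (y i) := by
              rcases h1 x hxW i hi with h | h <;> rcases h1 y hyW i hi with h' | h' <;>
                rw [Real.dist_eq, h, h'] <;>
                first
                  | (exact absurd (h.trans h'.symm) hne)
                  | norm_num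
          _ ≤ dist x y := dist_le_pi_dist x y i
end

section
/- Let X be an (n−k)-dimensional linear subspace of ℓ∞ⁿ with 0 ≤ k < n. Then the equilateral number of X satisfies e(X) ≥ 2^{n−k} / (n−k)^k. -/
/-!
Let `m = n - k`. Write a basis of `X` as the rows of an `m × n` matrix and pick `m` columns whose
minor has maximal absolute value. Multiplying by the inverse of that minor gives `a₁, …, aₘ ∈ X`
that restrict to the unit vectors on the chosen columns and, by Cramer's rule and maximality, have
all entries in `[-1, 1]`. The `2^m` sign combinations `∑ ±aⱼ` are pairwise at distance at least `2`
(look at a chosen column where the signs differ), and each of their other `k` coordinates lies in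
`[-m, m]`, which is covered by `m` intervals of length `2`. Pigeonholing on which intervals these
`k` coordinates fall into leaves at least `2^m / m^k` sign combinations at pairwise distance
exactly `2`.
-/

open Matrix Finset Module

theorem exists_fin_index_abs_sub_le_two (m : ℕ) [NeZero m] :
    ∃ c : ℝ → Fin m, ∀ v w : ℝ, |v| ≤ m → |w| ≤ m → c v = c w → |v - w| ≤ 2 := by
  have hm : 1 ≤ m := NeZero.one_le
  let c : ℝ → Fin m := fun v => ⟨min (m - 1) ⌊(v + m) / 2⌋₊, by omega⟩
  have hc : ∀ v : ℝ, |v| ≤ m → 2 * ((c v : ℕ) : ℝ) ≤ v + m ∧ v + m ≤ 2 * (c v : ℕ) + 2 := by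
    intro v hv
    rw [abs_le] at hv
    have h0 : 0 ≤ (v + m) / 2 := by linarith
    simp only [c]
    rcases le_total ⌊(v + m) / 2⌋₊ (m - 1) with h | h
    · rw [min_eq_right h]
      have := Nat.floor_le h0
      have := Nat.lt_floor_add_one ((v + m) / 2)
      constructor <;> linarith
    · rw [min_eq_left h]
      have : ((m - 1 : ℕ) : ℝ) ≤ (v + m) / 2 := (Nat.le_floor_iff h0).1 h
      push_cast [hm] at this ⊢
      constructor <;> linarith
  refine ⟨c, fun v w hv hw hvw => ?_⟩
  have hv' := hc v hv
  have hw' := hc w hw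
  rw [hvw] at hv'
  rw [abs_sub_le_iff]
  constructor <;> linarith

variable {m : ℕ} {ι : Type*}

section Minors

variable {K : Type*} [Field K]

theorem Matrix.det_mul_inv_submatrix_mul_apply (M : Matrix (Fin m) ι K) {g : Fin m → ι}
    (hdet : (M.submatrix id g).det ≠ 0) (j : Fin m) (i : ι) :
    (M.submatrix id g).det * ((M.submatrix id g)⁻¹ * M) j i =
      (M.submatrix id (Function.update g j i)).det := by
  set B := M.submatrix id g
  have hupdate : B.updateCol j (M.col i) = M.submatrix id (Function.update g j i) := by
    ext r l
    rcases eq_or_ne l j with rfl | hl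
    · simp
    · simp [hl, B]
  rw [← hupdate, ← cramer_apply, ← det_smul_inv_mulVec_eq_cramer B _ (isUnit_iff_ne_zero.mpr hdet)]
  rfl

theorem Matrix.abs_inv_submatrix_mul_apply_le_one {M : Matrix (Fin m) ι ℝ} {g : Fin m → ι}
    (hdet : (M.submatrix id g).det ≠ 0)
    (hmax : ∀ g', |(M.submatrix id g').det| ≤ |(M.submatrix id g).det|) (j : Fin m) (i : ι) :
    |((M.submatrix id g)⁻¹ * M) j i| ≤ 1 := by
  rw [← mul_le_mul_iff_right₀ (abs_pos.mpr hdet), mul_one, ← abs_mul,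
    M.det_mul_inv_submatrix_mul_apply hdet]
  exact hmax _

theorem Matrix.exists_det_submatrix_ne_zero [Fintype ι] {M : Matrix (Fin m) ι K}
    (hM : LinearIndependent K M.row) : ∃ g : Fin m → ι, (M.submatrix id g).det ≠ 0 := by
  have hspan : Submodule.span K (Set.range M.col) = ⊤ := by
    apply Submodule.eq_top_of_finrank_eq
    rw [← rank_eq_finrank_span_cols, hM.rank_matrix, Fintype.card_fin, finrank_fin_fun]
  obtain ⟨κ, a, -, hspan_a, hind⟩ := exists_linearIndependent' K M.col
  rw [hspan] at hspan_a
  let b : Basis κ K (Fin m → K) := Basis.mk hind hspan_a.ge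
  have : Fintype κ := FiniteDimensional.fintypeBasisIndex b
  have hcard : Fintype.card κ = m := by rw [← finrank_eq_card_basis b, finrank_fin_fun]
  let e := (Fintype.equivFinOfCardEq hcard).symm
  refine ⟨a ∘ e, ?_⟩
  have hcols : LinearIndependent K (M.submatrix id (a ∘ e)).col := hind.comp e e.injective
  exact ((isUnit_iff_isUnit_det _).mp (linearIndependent_cols_iff_isUnit.mp hcols)).ne_zero

end Minors

structure IsPivotFamily (a : Fin m → ι → ℝ) (g : Fin m → ι) : Prop where
  apply_pivot (j l : Fin m) : a j (g l) = if j = l then 1 else 0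
  abs_apply_le_one (j : Fin m) (i : ι) : |a j i| ≤ 1

theorem Submodule.exists_isPivotFamily [Fintype ι]
    (X : Submodule ℝ (ι → ℝ)) (hX : finrank ℝ X = m) :
    ∃ (a : Fin m → ι → ℝ) (g : Fin m → ι), (∀ j, a j ∈ X) ∧ IsPivotFamily a g := by
  let b : Basis (Fin m) ℝ X := finBasisOfFinrankEq ℝ X hX
  let M : Matrix (Fin m) ι ℝ := fun j => b j
  have hM : LinearIndependent ℝ M.row := b.linearIndependent.map' X.subtype X.ker_subtype
  obtain ⟨g₀, hg₀⟩ := M.exists_det_submatrix_ne_zero hM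
  obtain ⟨g, -, hmax⟩ := exists_max_image univ (fun g => |(M.submatrix id g).det|) ⟨g₀, mem_univ _⟩
  have hdet : (M.submatrix id g).det ≠ 0 := by
    have := hmax g₀ (mem_univ _)
    contrapose! this
    simpa [this] using hg₀
  refine ⟨(M.submatrix id g)⁻¹ * M, g, fun j => ?_, ⟨fun j l => ?_, ?_⟩⟩
  · rw [mul_apply_eq_vecMul, vecMul_eq_sum]
    exact X.sum_mem fun r _ => X.smul_mem _ (b r).2
  · rw [← one_apply, ← nonsing_inv_mul _ (isUnit_iff_ne_zero.mpr hdet)]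
    rfl
  · exact M.abs_inv_submatrix_mul_apply_le_one hdet fun g' => hmax g' (mem_univ _)

noncomputable def signComb (a : Fin m → ι → ℝ) (ε : Fin m → Bool) : ι → ℝ :=
  ∑ j, (if ε j then 1 else -1 : ℝ) • a j

theorem signComb_apply (a : Fin m → ι → ℝ) (ε : Fin m → Bool) (i : ι) :
    signComb a ε i = ∑ j, (if ε j then 1 else -1) * a j i := by
  simp only [signComb, Finset.sum_apply, Pi.smul_apply, smul_eq_mul]

theorem signComb_mem {a : Fin m → ι → ℝ} {X : Submodule ℝ (ι → ℝ)}
    (haX : ∀ j, a j ∈ X) (ε : Fin m → Bool) : signComb a ε ∈ X :=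
  X.sum_mem fun j _ => X.smul_mem _ (haX j)

namespace IsPivotFamily

variable {a : Fin m → ι → ℝ} {g : Fin m → ι}

theorem injective (ha : IsPivotFamily a g) : Function.Injective g := by
  intro l l' h
  by_contra hne
  have := ha.apply_pivot l l'
  rw [← h, ha.apply_pivot l l] at this
  simp [hne] at this

theorem signComb_apply_pivot (ha : IsPivotFamily a g) (ε : Fin m → Bool) (l : Fin m) :
    signComb a ε (g l) = if ε l then 1 else -1 := by
  simp [signComb_apply, ha.apply_pivot]

theorem abs_signComb_apply_le (ha : IsPivotFamily a g) (ε : Fin m → Bool) (i : ι) :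
    |signComb a ε i| ≤ m := calc
  |signComb a ε i| ≤ ∑ j, |(if ε j then 1 else -1) * a j i| := by
    rw [signComb_apply]; exact abs_sum_le_sum_abs _ _
  _ ≤ ∑ _j : Fin m, (1 : ℝ) := sum_le_sum fun j _ => by
    rw [abs_mul]; split_ifs <;> simpa using ha.abs_apply_le_one j i
  _ = m := by simp

theorem dist_signComb_eq_two [Fintype ι] (ha : IsPivotFamily a g) {ε δ : Fin m → Bool}
    (hne : ε ≠ δ) (hclose : ∀ i ∉ Set.range g, |signComb a ε i - signComb a δ i| ≤ 2) :
    dist (signComb a ε) (signComb a δ) = 2 := by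
  apply le_antisymm
  · refine (dist_pi_le_iff zero_le_two).2 fun i => ?_
    rw [Real.dist_eq]
    by_cases hi : i ∈ Set.range g
    · obtain ⟨l, rfl⟩ := hi
      rw [ha.signComb_apply_pivot, ha.signComb_apply_pivot]
      split_ifs <;> norm_num
    · exact hclose i hi
  · obtain ⟨l, hl⟩ := Function.ne_iff.mp hne
    calc (2 : ℝ) = dist (signComb a ε (g l)) (signComb a δ (g l)) := by
          rw [ha.signComb_apply_pivot, ha.signComb_apply_pivot, Real.dist_eq]
          cases hε : ε l <;> cases hδ : δ l <;> simp_all <;> norm_num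
      _ ≤ dist (signComb a ε) (signComb a δ) := dist_le_pi_dist _ _ _

theorem exists_equilateral_signComb [Fintype ι] [NeZero m] (ha : IsPivotFamily a g) :
    ∃ F : Finset (Fin m → Bool), (2 : ℝ) ^ m / (m : ℝ) ^ (Fintype.card ι - m) ≤ F.card ∧
      ∀ ε ∈ F, ∀ δ ∈ F, ε ≠ δ → dist (signComb a ε) (signComb a δ) = 2 := by
  classical
  obtain ⟨c, hc⟩ := exists_fin_index_abs_sub_le_two m
  let colour (ε : Fin m → Bool) (i : {i // i ∉ Set.range g}) : Fin m := c (signComb a ε i)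
  have hcard : Fintype.card ({i // i ∉ Set.range g} → Fin m) = m ^ (Fintype.card ι - m) := by
    rw [Fintype.card_fun, Fintype.card_fin, Fintype.card_subtype_compl,
      Set.card_range_of_injective ha.injective, Fintype.card_fin]
  obtain ⟨y, hy⟩ := Fintype.exists_le_card_fiber_of_nsmul_le_card colour
    (b := (2 : ℝ) ^ m / (m : ℝ) ^ (Fintype.card ι - m)) (by
      rw [hcard, nsmul_eq_mul, Fintype.card_fun, Fintype.card_fin, Fintype.card_bool]
      push_cast
      rw [mul_div_cancel₀ _ (pow_ne_zero _ (Nat.cast_ne_zero.mpr (NeZero.ne m)))])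
  refine ⟨_, hy, fun ε hε δ hδ hne => ?_⟩
  simp only [mem_filter_univ] at hε hδ
  exact ha.dist_signComb_eq_two hne fun i hi => hc _ _ (ha.abs_signComb_apply_le ε i)
    (ha.abs_signComb_apply_le δ i) (congrFun (hε.trans hδ.symm) ⟨i, hi⟩)

end IsPivotFamily

theorem stmt2 (n k : ℕ) (hk : k < n) (X : Submodule ℝ (Fin n → ℝ))
    (hdim : Module.finrank ℝ X = n - k) :
    ∃ S : Finset (Fin n → ℝ), (∀ x ∈ S, x ∈ X) ∧
      (∃ c : ℝ, 0 < c ∧ ∀ x ∈ S, ∀ y ∈ S, x ≠ y → dist x y = c) ∧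
      (2 : ℝ) ^ (n - k) / ((n : ℝ) - k) ^ k ≤ S.card := by
  have : NeZero (n - k) := ⟨by omega⟩
  obtain ⟨a, g, haX, ha⟩ := X.exists_isPivotFamily hdim
  obtain ⟨F, hF, hdist⟩ := ha.exists_equilateral_signComb
  have hinj : Set.InjOn (signComb a) F := fun ε hε δ hδ h => by
    by_contra hne
    have := hdist ε hε δ hδ hne
    rw [h, dist_self] at this
    exact two_ne_zero this.symm
  refine ⟨F.image (signComb a), ?_, ⟨2, two_pos, ?_⟩, ?_⟩
  · simp only [mem_image]
    rintro _ ⟨ε, -, rfl⟩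
    exact signComb_mem haX ε
  · simp only [mem_image]
    rintro _ ⟨ε, hε, rfl⟩ _ ⟨δ, hδ, rfl⟩ hne
    exact hdist ε hε δ hδ fun h => hne (h ▸ rfl)
  · rw [Fintype.card_fin, show n - (n - k) = k by omega] at hF
    rwa [card_image_of_injOn hinj, ← Nat.cast_sub hk.le]
end

section
/- Let P be an origin-symmetric convex polytope in ℝ^d with at most (4d)/3 − (1 + √(8d+9))/6 pairs of opposite facets, and let X be the d-dimensional normed space whose unit ball is P. Then e(X) ≥ d + 1. -/
/-!
Write `A x = (∑ j, a i j * x j)ᵢ`. Then `gauge P x = ‖A x‖∞`, so the space is isometric to the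
subspace `V = range A` of `ℓ∞^f`, whose codimension is `k = f - d`. Among the images in
`ℝ^f ⧸ V` of the unit vectors indexed by a set `M`, the subfamily of maximal determinant has at
most `k` members, and by Cramer's rule every other member is a combination of it with
coefficients in `[-1, 1]`. Repeating this four times on the remaining coordinates leaves a set
`M` of at least `f - 4k` coordinates and, for each `i ∈ M`, a vector of `V` equal to `4 eᵢ` on
`M` and bounded by `1` in absolute value off `M`. The sums of at most two of these vectors are
pairwise at distance `4`, giving `1 + m + C(m, 2)` equidistant points, `m = #M`; the hypothesis on
`f` makes this at least `d + 1`.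
-/

open Finset Module Submodule

variable {ι : Type*}

theorem Module.Basis.abs_coord_le_one_of_abs_det_update_le {κ W : Type*} [Fintype κ]
    [DecidableEq κ] [AddCommGroup W] [Module ℝ W] (e : Basis κ ℝ W) {v : κ → W}
    (hli : LinearIndependent ℝ v) (hsp : ⊤ ≤ span ℝ (Set.range v)) (k : κ) (x : W)
    (h : |e.det (Function.update v k x)| ≤ |e.det v|) :
    |(Basis.mk hli hsp).coord k x| ≤ 1 := by
  have hdet : e.det v ≠ 0 := (e.is_basis_iff_det.1 ⟨hli, top_le_iff.1 hsp⟩).ne_zero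
  have hcramer := congrArg (· x) (e.det_smul_mk_coord_eq_det_update hli hsp k)
  simp only [LinearMap.smul_apply, smul_eq_mul, MultilinearMap.toLinearMap_apply,
    AlternatingMap.coe_multilinearMap] at hcramer
  rw [← hcramer, abs_mul] at h
  exact (mul_le_iff_le_one_right (abs_pos.2 hdet)).1 h

theorem exists_subset_forall_eq_sum_smul_abs_le_one {E : Type*} [DecidableEq ι]
    [AddCommGroup E] [Module ℝ E] [FiniteDimensional ℝ E] (q : ι → E) (I : Finset ι) :
    ∃ D ⊆ I, #D ≤ finrank ℝ E ∧
      ∀ i ∈ I, ∃ c : ι → ℝ, (∀ j, |c j| ≤ 1) ∧ q i = ∑ j ∈ D, c j • q j := by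
  set W := span ℝ (q '' I)
  let w : I → W := fun i => ⟨q i, subset_span ⟨i, i.2, rfl⟩⟩
  have hw : span ℝ (Set.range w) = ⊤ := by
    apply map_injective_of_injective W.injective_subtype
    rw [map_span, Submodule.map_top, range_subtype, ← Set.range_comp]
    congr 1
    ext; simp [w]
  obtain ⟨κ, a, ha, hspan, hli⟩ := exists_linearIndependent' ℝ w
  rw [hw] at hspan
  have : Finite κ := Finite.of_injective a ha
  have : Fintype κ := Fintype.ofFinite κ
  classical
  let b := Basis.mk hli hspan.ge
  have : Nonempty (κ → I) := ⟨a⟩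
  obtain ⟨σ, hσ⟩ := Finite.exists_max fun σ : κ → I => |b.det (w ∘ σ)|
  have hdet : b.det (w ∘ σ) ≠ 0 := by
    have h := hσ a
    rw [show b.det (w ∘ a) = 1 by convert b.det_self; simp [b], abs_one] at h
    exact abs_pos.1 (one_pos.trans_le h)
  obtain ⟨hliσ, hspσ⟩ := b.is_basis_iff_det.2 (isUnit_iff_ne_zero.2 hdet)
  let b' := Basis.mk hliσ hspσ.ge
  have hcoord : ∀ i : I, ∀ k, |b'.coord k (w i)| ≤ 1 := fun i k =>
    b.abs_coord_le_one_of_abs_det_update_le hliσ hspσ.ge k (w i)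
      (by simpa only [← Function.comp_update] using hσ (Function.update σ k i))
  have hσinj : Function.Injective fun k => (σ k : ι) :=
    Subtype.val_injective.comp hliσ.injective.of_comp
  refine ⟨univ.image fun k => (σ k : ι), by simp [image_subset_iff], ?_, fun i hi => ?_⟩
  · calc #(univ.image fun k => (σ k : ι)) ≤ Fintype.card κ := card_image_le
      _ = finrank ℝ W := (finrank_eq_card_basis b).symm
      _ ≤ finrank ℝ E := Submodule.finrank_le W
  set coeff := fun k => b'.coord k (w ⟨i, hi⟩)
  refine ⟨Function.extend (fun k => (σ k : ι)) coeff 0, fun j => ?_, ?_⟩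
  · by_cases hj : ∃ k, (σ k : ι) = j
    · obtain ⟨k, rfl⟩ := hj
      rw [hσinj.extend_apply]
      exact hcoord _ k
    · simp [Function.extend_apply' _ _ _ hj]
  · rw [sum_image fun _ _ _ _ h => hσinj h]
    have := congrArg Subtype.val (b'.sum_repr (w ⟨i, hi⟩))
    simpa [hσinj.extend_apply, b', coeff, w] using this.symm

section Coordinates

variable [DecidableEq ι]

theorem single_sub_sum_single_mem_of_mkQ_eq {V : Submodule ℝ (ι → ℝ)} {i : ι} {D : Finset ι}
    {c : ι → ℝ} (h : V.mkQ (Pi.single i 1) = ∑ j ∈ D, c j • V.mkQ (Pi.single j 1)) :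
    Pi.single i 1 - ∑ j ∈ D, Pi.single j (c j) ∈ V := by
  have hsingle : ∀ j, Pi.single j (c j) = c j • (Pi.single j 1 : ι → ℝ) := fun j => by
    rw [← Pi.single_smul, smul_eq_mul, mul_one]
  rw [← V.ker_mkQ, LinearMap.mem_ker, map_sub, map_sum, h, sub_eq_zero]
  simp only [hsingle, map_smul]

theorem single_sub_sum_single_apply (i : ι) (D : Finset ι) (c : ι → ℝ) (p : ι) :
    (Pi.single i 1 - ∑ j ∈ D, Pi.single j (c j) : ι → ℝ) p =
      (if p = i then 1 else 0) - if p ∈ D then c p else 0 := by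
  rw [Pi.sub_apply, Finset.sum_apply, sum_pi_single, Pi.single_apply]

theorem exists_finset_peaked_mem [Fintype ι] (V : Submodule ℝ (ι → ℝ)) (n : ℕ) :
    ∃ M : Finset ι, Fintype.card ι ≤ #M + n * finrank ℝ ((ι → ℝ) ⧸ V) ∧
      ∀ i ∈ M, ∃ v ∈ V, (∀ p ∈ M, v p = if p = i then (n : ℝ) else 0) ∧ ∀ p ∉ M, |v p| ≤ 1 := by
  induction n with
  | zero => exact ⟨univ, by simp, fun i _ => ⟨0, V.zero_mem, by simp, by simp⟩⟩
  | succ n ih =>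
    obtain ⟨M, hcard, hpeak⟩ := ih
    obtain ⟨D, hDM, hDcard, hrepr⟩ :=
      exists_subset_forall_eq_sum_smul_abs_le_one (fun j => V.mkQ (Pi.single j 1)) M
    refine ⟨M \ D, ?_, fun i hi => ?_⟩
    · rw [← card_sdiff_add_card_eq_card hDM] at hcard
      rw [add_one_mul]
      omega
    obtain ⟨hiM, hiD⟩ := mem_sdiff.1 hi
    obtain ⟨v, hvV, hvM, hvout⟩ := hpeak i hiM
    obtain ⟨c, hc, hci⟩ := hrepr i hiM
    -- `D` is removed from the new `M`, so off the new `M` at most one of the two summands is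
    -- nonzero.
    refine ⟨v + (Pi.single i 1 - ∑ j ∈ D, Pi.single j (c j)),
      V.add_mem hvV (single_sub_sum_single_mem_of_mkQ_eq hci), fun p hp => ?_, fun p hp => ?_⟩
    · obtain ⟨hpM, hpD⟩ := mem_sdiff.1 hp
      rw [Pi.add_apply, single_sub_sum_single_apply, hvM p hpM, if_neg hpD]
      split_ifs <;> push_cast <;> ring
    · have hpi : p ≠ i := fun h => hp (h ▸ hi)
      rw [Pi.add_apply, single_sub_sum_single_apply, if_neg hpi, zero_sub]
      by_cases hpM : p ∈ M
      · have hpD : p ∈ D := by simpa [hpM] using hp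
        rw [hvM p hpM, if_neg hpi, if_pos hpD, zero_add, abs_neg]
        exact hc p
      · rw [if_neg fun h => hpM (hDM h), neg_zero, add_zero]
        exact hvout p hpM

end Coordinates

section PeakedFamily

variable {M T T' : Finset ι} {v : ι → ι → ℝ}

theorem sum_apply_eq_ite_of_subset [DecidableEq ι] {a : ℝ}
    (hvM : ∀ i ∈ M, ∀ p ∈ M, v i p = if p = i then a else 0) (hT : T ⊆ M) {p : ι}
    (hp : p ∈ M) : (∑ i ∈ T, v i) p = if p ∈ T then a else 0 := by
  rw [Finset.sum_apply, sum_congr rfl fun i hi => hvM i (hT hi) p hp, sum_ite_eq]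

theorem abs_sum_apply_le_card_of_subset (hvout : ∀ i ∈ M, ∀ p ∉ M, |v i p| ≤ 1) (hT : T ⊆ M)
    {p : ι} (hp : p ∉ M) : |(∑ i ∈ T, v i) p| ≤ #T := by
  rw [Finset.sum_apply]
  refine (abs_sum_le_sum_abs _ _).trans ?_
  simpa using sum_le_card_nsmul T _ 1 fun i hi => hvout i (hT hi) p hp

theorem norm_sum_sub_sum_eq [Fintype ι] [DecidableEq ι] {ℓ : ℕ}
    (hvM : ∀ i ∈ M, ∀ p ∈ M, v i p = if p = i then (2 * ℓ : ℝ) else 0)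
    (hvout : ∀ i ∈ M, ∀ p ∉ M, |v i p| ≤ 1) (hT : T ⊆ M) (hT' : T' ⊆ M)
    (hTℓ : #T ≤ ℓ) (hT'ℓ : #T' ≤ ℓ) (hne : T ≠ T') :
    ‖∑ i ∈ T, v i - ∑ i ∈ T', v i‖ = 2 * ℓ := by
  apply le_antisymm
  · refine (pi_norm_le_iff_of_nonneg (by positivity)).2 fun p => ?_
    rw [Pi.sub_apply, Real.norm_eq_abs]
    by_cases hp : p ∈ M
    · rw [sum_apply_eq_ite_of_subset hvM hT hp, sum_apply_eq_ite_of_subset hvM hT' hp]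
      split_ifs <;> simp
    · have h := abs_sum_apply_le_card_of_subset hvout hT hp
      have h' := abs_sum_apply_le_card_of_subset hvout hT' hp
      have hcard : (#T : ℝ) + #T' ≤ 2 * ℓ := by norm_cast; omega
      linarith [abs_sub ((∑ i ∈ T, v i) p) ((∑ i ∈ T', v i) p)]
  · obtain ⟨p, hp⟩ := symmDiff_nonempty.2 hne
    have hpM : p ∈ M := by
      rcases mem_symmDiff.1 hp with h | h
      exacts [hT h.1, hT' h.1]
    refine le_trans ?_ (norm_le_pi_norm _ p)
    rw [Pi.sub_apply, Real.norm_eq_abs, sum_apply_eq_ite_of_subset hvM hT hpM,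
      sum_apply_eq_ite_of_subset hvM hT' hpM]
    rcases mem_symmDiff.1 hp with ⟨h, h'⟩ | ⟨h, h'⟩ <;> simp [h, h']

end PeakedFamily

theorem card_filter_powerset_card_le {α : Type*} (s : Finset α) (ℓ : ℕ) :
    #{T ∈ s.powerset | #T ≤ ℓ} = ∑ r ∈ range (ℓ + 1), (#s).choose r := by
  classical
  have : {T ∈ s.powerset | #T ≤ ℓ} = (range (ℓ + 1)).biUnion (s.powersetCard ·) := by
    ext T; simp [and_comm]
  rw [this, card_biUnion fun i _ j _ hij => pairwise_disjoint_powersetCard s hij]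
  simp only [card_powersetCard]

theorem exists_equilateral_subset_submodule [Fintype ι] [DecidableEq ι]
    (V : Submodule ℝ (ι → ℝ)) (ℓ : ℕ) :
    ∃ S : Finset (ι → ℝ), ↑S ⊆ (V : Set (ι → ℝ)) ∧
      (∀ x ∈ S, ∀ y ∈ S, x ≠ y → ‖x - y‖ = 2 * ℓ) ∧
      ∑ r ∈ range (ℓ + 1), (Fintype.card ι - 2 * ℓ * finrank ℝ ((ι → ℝ) ⧸ V)).choose r ≤ #S := by
  obtain ⟨M, hMcard, hpeak⟩ := exists_finset_peaked_mem V (2 * ℓ)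
  choose! v hvV hvM hvout using hpeak
  push_cast at hvM
  set 𝒯 := {T ∈ M.powerset | #T ≤ ℓ}
  have hmem𝒯 : ∀ T ∈ 𝒯, T ⊆ M ∧ #T ≤ ℓ := fun T hT => by simpa [𝒯] using hT
  have hdist : ∀ T ∈ 𝒯, ∀ T' ∈ 𝒯, T ≠ T' → ‖∑ i ∈ T, v i - ∑ i ∈ T', v i‖ = 2 * ℓ :=
    fun T hT T' hT' => norm_sum_sub_sum_eq hvM hvout (hmem𝒯 T hT).1 (hmem𝒯 T' hT').1
      (hmem𝒯 T hT).2 (hmem𝒯 T' hT').2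
  refine ⟨𝒯.image fun T => ∑ i ∈ T, v i, ?_, ?_, ?_⟩
  · intro _ hx
    obtain ⟨T, hT, rfl⟩ := mem_image.1 hx
    exact sum_mem fun i hi => hvV i ((hmem𝒯 T hT).1 hi)
  · simp only [mem_image]
    rintro _ ⟨T, hT, rfl⟩ _ ⟨T', hT', rfl⟩ hne
    exact hdist T hT T' hT' (by rintro rfl; exact hne rfl)
  · rw [card_image_of_injOn, card_filter_powerset_card_le]
    · gcongr
      omega
    intro T hT T' hT' heq
    by_contra hne
    simp only at heq
    have h := hdist T hT T' hT' hne
    rw [heq, sub_self, norm_zero] at h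
    -- Distinct points can only coincide when `ℓ = 0`, where `𝒯 = {∅}`.
    have hℓ : ℓ = 0 := by exact_mod_cast (mul_eq_zero.1 h.symm).resolve_left two_ne_zero
    have h𝒯 : ∀ T ∈ 𝒯, T = ∅ := fun T hT => card_eq_zero.1 (by have := (hmem𝒯 T hT).2; omega)
    exact hne ((h𝒯 T hT).trans (h𝒯 T' hT').symm)

theorem gauge_preimage_linearMap {E F : Type*} [AddCommGroup E] [Module ℝ E] [AddCommGroup F]
    [Module ℝ F] (A : E →ₗ[ℝ] F) (s : Set F) (x : E) :
    gauge (A ⁻¹' s) x = gauge s (A x) := by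
  simp only [gauge]
  congr with r
  refine and_congr_right fun hr => ?_
  rw [Set.mem_smul_set_iff_inv_smul_mem₀ hr.ne', Set.mem_smul_set_iff_inv_smul_mem₀ hr.ne',
    Set.mem_preimage, map_smul]

theorem Matrix.mulVecLin_injective_of_span_eq_top {m n K : Type*} [Fintype m] [Fintype n]
    [Field K] (B : Matrix m n K) (h : span K (Set.range B) = ⊤) :
    Function.Injective B.mulVecLin := by
  have hrank : finrank K (LinearMap.range B.mulVecLin) = Fintype.card n := by
    change B.rank = _
    rw [B.rank_eq_finrank_span_row]
    change finrank K (span K (Set.range B)) = _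
    rw [h, finrank_top, finrank_fintype_fun_eq_card]
  have := B.mulVecLin.finrank_range_add_finrank_ker
  rw [hrank, finrank_fintype_fun_eq_card, add_eq_left, Submodule.finrank_eq_zero] at this
  exact LinearMap.ker_eq_bot.1 this

theorem gauge_setOf_abs_sum_mul_le_one {m n : Type*} [Fintype m] [Fintype n] (a : m → n → ℝ)
    (x : n → ℝ) : gauge {y | ∀ i, |∑ j, a i j * y j| ≤ 1} x = ‖(Matrix.of a).mulVecLin x‖ := by
  have : {y | ∀ i, |∑ j, a i j * y j| ≤ 1} =
      (Matrix.of a).mulVecLin ⁻¹' Metric.closedBall 0 1 := by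
    ext y
    simp [pi_norm_le_iff_of_nonneg, Matrix.mulVec, dotProduct]
  rw [this, gauge_preimage_linearMap, gauge_closedBall zero_le_one, div_one]

theorem le_add_choose_two_of_sqrt_le {d m : ℕ} (h : (1 + Real.sqrt (8 * d + 9)) / 2 ≤ m) :
    d ≤ m + m.choose 2 := by
  have hsq := Real.sq_sqrt (show (0 : ℝ) ≤ 8 * d + 9 by positivity)
  have hm : (2 * d : ℝ) ≤ m * m + m := by nlinarith [Real.sqrt_nonneg (8 * d + 9)]
  have : (d : ℝ) ≤ m + (m.choose 2 : ℕ) := by rw [Nat.cast_choose_two]; linarith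
  exact_mod_cast this

theorem stmt15 (d f : ℕ) (a : Fin f → Fin d → ℝ)
    (hspan : Submodule.span ℝ (Set.range a) = ⊤)
    (P : Set (Fin d → ℝ))
    (hP : P = {x | ∀ i : Fin f, |∑ j, a i j * x j| ≤ 1})
    (hf : (f : ℝ) ≤ 4 * d / 3 - (1 + Real.sqrt (8 * d + 9)) / 6) :
    ∃ S : Finset (Fin d → ℝ),
      (∃ c : ℝ, 0 < c ∧ ∀ x ∈ S, ∀ y ∈ S, x ≠ y → gauge P (x - y) = c) ∧
      d + 1 ≤ S.card := by
  classical
  set A := (Matrix.of a).mulVecLin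
  have hA : Function.Injective A := (Matrix.of a).mulVecLin_injective_of_span_eq_top hspan
  set k := finrank ℝ ((Fin f → ℝ) ⧸ LinearMap.range A)
  have hcodim : k + d = f := by
    have := (LinearMap.range A).finrank_quotient_add_finrank
    rwa [LinearMap.finrank_range_of_inj hA, finrank_fin_fun, finrank_fin_fun] at this
  obtain ⟨S, hSA, hSdist, hScard⟩ := exists_equilateral_subset_submodule (LinearMap.range A) 2
  obtain ⟨S, -, rfl⟩ := (subset_set_image_iff (s := Set.univ) (f := A)).1
    (by rwa [Set.image_univ, ← LinearMap.coe_range])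
  refine ⟨S, ⟨4, by norm_num, fun x hx y hy hxy => ?_⟩, ?_⟩
  · rw [hP, gauge_setOf_abs_sum_mul_le_one, map_sub,
      hSdist _ (mem_image_of_mem A hx) _ (mem_image_of_mem A hy) (hA.ne hxy)]
    norm_num
  rw [card_image_of_injective S hA, Fintype.card_fin] at hScard
  simp only [sum_range_succ, range_zero, sum_empty, Nat.choose_zero_right,
    Nat.choose_one_right] at hScard
  change 1 + (f - 2 * 2 * k) + (f - 2 * 2 * k).choose 2 ≤ #S at hScard
  have hm : (1 + Real.sqrt (8 * d + 9)) / 2 ≤ ((f - 2 * 2 * k : ℕ) : ℝ) := by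
    have hf' : (f : ℝ) ≤ (f - 2 * 2 * k : ℕ) + 4 * k := by exact_mod_cast (by omega)
    have hk : (k : ℝ) + d = f := by exact_mod_cast hcodim
    linarith
  have := le_add_choose_two_of_sqrt_le hm
  omega
end

section
/- For every n ≥ 1, the equilateral number of ℓ∞ⁿ is exactly 2ⁿ: the set {−1,1}ⁿ is a 2-equilateral set of cardinality 2ⁿ, and no equilateral set in ℓ∞ⁿ has more than 2ⁿ points. -/
theorem stmt16 (n : ℕ) (hn : 1 ≤ n) :
    (∃ S : Finset (Fin n → ℝ),
      (↑S : Set (Fin n → ℝ)) = {x | ∀ i, x i = 1 ∨ x i = -1} ∧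
      S.card = 2 ^ n ∧
      ∀ x ∈ S, ∀ y ∈ S, x ≠ y → dist x y = 2) ∧
    ∀ (S : Finset (Fin n → ℝ)) (c : ℝ), 0 < c →
      (∀ x ∈ S, ∀ y ∈ S, x ≠ y → dist x y = c) → S.card ≤ 2 ^ n := by
  constructor
  · refine ⟨(Finset.univ : Finset (Fin n → Bool)).image
      (fun b i => if b i then (1:ℝ) else -1), ?_, ?_, ?_⟩
    · ext x
      simp only [Finset.coe_image, Finset.coe_univ, Set.image_univ, Set.mem_range,
        Set.mem_setOf_eq]
      constructor
      · rintro ⟨b, rfl⟩ i; by_cases h : b i <;> simp [h]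
      · intro hx
        refine ⟨fun i => decide (x i = 1), ?_⟩
        funext i
        rcases hx i with h | h <;> simp [h] <;> norm_num
    · rw [Finset.card_image_of_injective _ ?_, Finset.card_univ]
      · simp
      · intro a b hab
        funext i
        have := congrFun hab i
        by_cases ha : a i <;> by_cases hb : b i <;>
          simp only [ha, hb, if_true, if_false] at this <;> simp [ha, hb] <;> norm_num at this
    · intro x hx y hy hxy
      simp only [Finset.mem_image, Finset.mem_univ, true_and] at hx hy
      obtain ⟨a, rfl⟩ := hx
      obtain ⟨b, rfl⟩ := hy
      obtain ⟨i, hi⟩ : ∃ i, a i ≠ b i := by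
        by_contra h; push_neg at h; exact hxy (by rw [funext h])
      apply le_antisymm
      · refine (dist_pi_le_iff (by norm_num)).2 fun j => ?_
        by_cases ha : a j <;> by_cases hb : b j <;>
          simp [ha, hb, Real.dist_eq] <;> norm_num
      · have h2 : dist (if a i then (1:ℝ) else -1) (if b i then (1:ℝ) else -1) = 2 := by
          by_cases ha : a i <;> by_cases hb : b i <;>
            simp_all [Real.dist_eq] <;> norm_num
        have h3 : dist (if a i then (1:ℝ) else -1) (if b i then (1:ℝ) else -1) ≤
            dist (fun j => if a j then (1:ℝ) else -1) (fun j => if b j then (1:ℝ) else -1) :=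
          dist_le_pi_dist (fun j => if a j then (1:ℝ) else -1) (fun j => if b j then (1:ℝ) else -1) i
        rw [h2] at h3
        exact h3
  · intro S c hc hS
    rcases S.eq_empty_or_nonempty with rfl | hSe
    · simp
    set m : Fin n → ℝ := fun i => S.inf' hSe (fun x => x i) with hm
    have hub : ∀ x ∈ S, ∀ i, x i ≤ m i + c := by
      intro x hx i
      obtain ⟨z, hz, hzm⟩ := Finset.exists_mem_eq_inf' hSe (fun x => x i)
      have hd : dist x z ≤ c := by
        rcases eq_or_ne x z with rfl | hne
        · simpa using hc.le
        · exact (hS x hx z hz hne).le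
      have h1 : |x i - z i| ≤ c := by
        have := (dist_le_pi_dist x z i).trans hd
        rwa [Real.dist_eq] at this
      have h2 := (abs_le.1 h1).2
      have hmi : m i = z i := hzm
      linarith
    have hlb : ∀ x ∈ S, ∀ i, m i ≤ x i := fun x hx i => Finset.inf'_le _ hx
    have inj : Set.InjOn (fun x : Fin n → ℝ => fun i => decide (x i ≤ m i + c/2)) S := by
      intro x hx y hy h
      by_contra hxy
      have hd : dist x y < c := by
        rw [dist_pi_lt_iff hc]
        intro i
        have h1 := congrFun h i
        simp only [decide_eq_decide] at h1
        rw [Real.dist_eq, abs_lt]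
        have := hub x hx i; have := hub y hy i
        have := hlb x hx i; have := hlb y hy i
        by_cases hxi : x i ≤ m i + c/2
        · have hyi := h1.1 hxi
          constructor <;> linarith
        · have hyi : ¬ y i ≤ m i + c/2 := fun hy' => hxi (h1.2 hy')
          push_neg at hxi hyi
          constructor <;> linarith
      exact absurd (hS x hx y hy hxy) (ne_of_lt hd)
    calc S.card ≤ (Finset.univ : Finset (Fin n → Bool)).card :=
          Finset.card_le_card_of_injOn _ (fun _ _ => Finset.mem_univ _) inj
      _ = 2 ^ n := by simp
end

section
/- Let A ∈ ℝ^{k×n} have rank k and let X = {x ∈ ℝⁿ : Ax = 0} be its kernel, an (n−k)-dimensional subspace. Among all k-element subsets {i₁, …, i_k} ⊆ [n] of column indices, choose one maximizing |det(b_{i₁}, …, b_{i_k})| where b_i is the i-th column of A. Then this maximal determinant is nonzero, and for any choice of values in {−1,1} for the remaining n−k coordinates, there is a unique vector in X extending them, whose remaining k coordinates are all bounded in absolute value by n−k. -/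
/-!
Let `B` be the maximal minor. By Cramer's rule and multilinearity of the determinant, a kernel
vector `x` satisfies `det B * x (I i) = -∑_{j ∉ range I} x j * det B⟨i ← j⟩`, where `B⟨i ← j⟩` is
`B` with its `i`-th column replaced by column `j` of `A`. Each `B⟨i ← j⟩` is again a `k × k` minor
of `A`, hence `|det B⟨i ← j⟩| ≤ |det B|`, and the triangle inequality with `|x j| = 1` gives
`|x (I i)| ≤ n - k`. The maximal minor is nonzero because `A` has full row rank.
-/

open Matrix Finset Function

namespace Matrix

variable {m n K : Type*} [Fintype m]

theorem det_submatrix_eq_zero_of_not_injective [DecidableEq m] [CommRing K] (A : Matrix m n K)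
    {J : m → n} (hJ : ¬Injective J) : (A.submatrix id J).det = 0 := by
  obtain ⟨i, i', hJi, hi⟩ : ∃ i i', J i = J i' ∧ i ≠ i' := by
    simpa [Injective] using hJ
  exact det_zero_of_column_eq hi fun r => by simp [hJi]

theorem exists_det_submatrix_ne_zero_s18 [DecidableEq m] [Field K] [Fintype n] (A : Matrix m n K)
    (hA : A.rank = Fintype.card m) : ∃ J : m → n, (A.submatrix id J).det ≠ 0 := by
  obtain ⟨κ, a, ha, hspan, hli⟩ := exists_linearIndependent' K A.col
  have := Fintype.ofInjective a ha
  have hcard : Fintype.card κ = Fintype.card m := by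
    rw [← finrank_span_eq_card hli, hspan, ← rank_eq_finrank_span_cols, hA]
  let e := Fintype.equivOfCardEq hcard
  have hcols : LinearIndependent K (A.submatrix id (a ∘ e.symm)).col :=
    hli.comp e.symm e.symm.injective
  exact ⟨a ∘ e.symm, ((isUnit_iff_isUnit_det _).mp
    (linearIndependent_cols_iff_isUnit.mp hcols)).ne_zero⟩

theorem cramer_submatrix_col_apply [DecidableEq m] [CommRing K] [DecidableEq n]
    (A : Matrix m n K) (I : m → n) (j : n) (i : m) :
    cramer (A.submatrix id I) (A.col j) i = (A.submatrix id (update I i j)).det := by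
  rw [cramer_apply]
  congr
  ext r s
  rcases eq_or_ne s i with rfl | hs <;> simp [*]

theorem mulVec_indicator_range [NonUnitalNonAssocSemiring K] [Fintype n] (A : Matrix m n K)
    {I : m → n} (hI : Injective I) (x : n → K) :
    A *ᵥ (Set.range I).indicator x = A.submatrix id I *ᵥ (x ∘ I) := by
  ext r
  refine (Fintype.sum_of_injective I hI _ _ (fun j hj => ?_) fun i => ?_).symm
  · simp [hj]
  · simp

theorem mulVec_eq_submatrix_mulVec_add [NonUnitalNonAssocSemiring K] [Fintype n]
    (A : Matrix m n K) {I : m → n} (hI : Injective I) (x : n → K) :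
    A *ᵥ x = A.submatrix id I *ᵥ (x ∘ I) + A *ᵥ (Set.range I)ᶜ.indicator x := by
  rw [← mulVec_indicator_range A hI, ← mulVec_add, Set.indicator_self_add_compl]

theorem existsUnique_mulVec_eq_zero_and_eq_off_range [DecidableEq m] [Field K] [Fintype n]
    (A : Matrix m n K) {I : m → n} (hI : Injective I) (hdet : (A.submatrix id I).det ≠ 0)
    (v : n → K) : ∃! x : n → K, A *ᵥ x = 0 ∧ ∀ j ∉ Set.range I, x j = v j := by
  set B := A.submatrix id I
  have hB : IsUnit B := (isUnit_iff_isUnit_det B).mpr hdet.isUnit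
  have hsplit : ∀ x : n → K, (∀ j ∉ Set.range I, x j = v j) →
      A *ᵥ x = B *ᵥ (x ∘ I) + A *ᵥ (Set.range I)ᶜ.indicator v := fun x hx => by
    rw [mulVec_eq_submatrix_mulVec_add A hI,
      Set.indicator_congr (s := (Set.range I)ᶜ) fun j hj => hx j hj]
  obtain ⟨y, hy⟩ := mulVec_surjective_iff_isUnit.mpr hB (-(A *ᵥ (Set.range I)ᶜ.indicator v))
  have hext : ∀ j ∉ Set.range I, extend I y v j = v j := fun j hj => extend_apply' _ _ _ hj
  refine ⟨extend I y v, ⟨?_, hext⟩, fun x ⟨hx0, hxv⟩ => ?_⟩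
  · rw [hsplit _ hext, extend_comp hI, hy, neg_add_cancel]
  · have hxI : x ∘ I = y := mulVec_injective_iff_isUnit.mpr hB <| by
      rw [hy, eq_neg_iff_add_eq_zero, ← hsplit x hxv, hx0]
    funext j
    by_cases hj : j ∈ Set.range I
    · obtain ⟨i, rfl⟩ := hj
      rw [hI.extend_apply, ← hxI]
      rfl
    · rw [hxv j hj, hext j hj]

section Ordered

variable [DecidableEq m] [CommRing K] [LinearOrder K] [IsStrictOrderedRing K] [Fintype n]
  [DecidableEq n]

theorem abs_le_sum_abs_of_submatrix_mulVec_eq (A : Matrix m n K) {I : m → n}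
    (hdet : (A.submatrix id I).det ≠ 0)
    (hmax : ∀ J : m → n, |(A.submatrix id J).det| ≤ |(A.submatrix id I).det|)
    {y : m → K} {z : n → K} (hyz : A.submatrix id I *ᵥ y = A *ᵥ z) (i : m) :
    |y i| ≤ ∑ j, |z j| := by
  set B := A.submatrix id I
  have hcramer : B.det * y i = ∑ j, z j * (A.submatrix id (update I i j)).det := by
    have : cramer B (B *ᵥ y) = B.det • y := by
      rw [cramer_eq_adjugate_mulVec, mulVec_mulVec, adjugate_mul, smul_mulVec, one_mulVec]
    rw [← smul_eq_mul, ← Pi.smul_apply, ← this, hyz, mulVec_eq_sum, map_sum, Finset.sum_apply]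
    refine Finset.sum_congr rfl fun j _ => ?_
    rw [op_smul_eq_smul, map_smul, Pi.smul_apply, smul_eq_mul, ← cramer_submatrix_col_apply]
    rfl
  have hpos : 0 < |B.det| := abs_pos.mpr hdet
  refine le_of_mul_le_mul_left ?_ hpos
  rw [← abs_mul, hcramer, mul_comm]
  calc |∑ j, z j * (A.submatrix id (update I i j)).det|
      ≤ ∑ j, |z j| * |(A.submatrix id (update I i j)).det| :=
        (abs_sum_le_sum_abs _ _).trans_eq (by simp only [abs_mul])
    _ ≤ ∑ j, |z j| * |B.det| :=
        sum_le_sum fun j _ => mul_le_mul_of_nonneg_left (hmax _) (abs_nonneg _)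
    _ = (∑ j, |z j|) * |B.det| := (sum_mul ..).symm

theorem abs_apply_le_of_mulVec_eq_zero (A : Matrix m n K) {I : m → n} (hI : Injective I)
    (hdet : (A.submatrix id I).det ≠ 0)
    (hmax : ∀ J : m → n, |(A.submatrix id J).det| ≤ |(A.submatrix id I).det|)
    {x : n → K} (hx : A *ᵥ x = 0) (i : m) :
    |x (I i)| ≤ ∑ j, |(Set.range I)ᶜ.indicator x j| := by
  have hyz : A.submatrix id I *ᵥ (x ∘ I) = A *ᵥ -(Set.range I)ᶜ.indicator x := by
    rw [mulVec_neg, eq_neg_iff_add_eq_zero, ← mulVec_eq_submatrix_mulVec_add A hI, hx]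
  exact (abs_le_sum_abs_of_submatrix_mulVec_eq A hdet hmax hyz i).trans_eq
    (by simp only [Pi.neg_apply, abs_neg])

end Ordered

end Matrix

theorem stmt18_general (k n : ℕ) (A : Matrix (Fin k) (Fin n) ℝ)
    (hrank : A.rank = k)
    (I : Fin k → Fin n) (hI : Function.Injective I)
    (hmax : ∀ J : Fin k → Fin n, Function.Injective J →
      |(A.submatrix id J).det| ≤ |(A.submatrix id I).det|) :
    (A.submatrix id I).det ≠ 0 ∧
    ∀ v : Fin n → ℝ, (∀ i : Fin n, i ∉ Set.range I → v i = 1 ∨ v i = -1) →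
      ∃ x : Fin n → ℝ,
        (A.mulVec x = 0 ∧ ∀ i : Fin n, i ∉ Set.range I → x i = v i) ∧
        (∀ i ∈ Set.range I, |x i| ≤ (n : ℝ) - k) ∧
        ∀ x' : Fin n → ℝ, A.mulVec x' = 0 →
          (∀ i : Fin n, i ∉ Set.range I → x' i = v i) → x' = x := by
  have hmax_all : ∀ J : Fin k → Fin n, |(A.submatrix id J).det| ≤ |(A.submatrix id I).det| := by
    intro J
    by_cases hJ : Injective J
    · exact hmax J hJ
    · simp [det_submatrix_eq_zero_of_not_injective A hJ]
  have hdet : (A.submatrix id I).det ≠ 0 := by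
    obtain ⟨J, hJ⟩ := A.exists_det_submatrix_ne_zero_s18 (by rwa [Fintype.card_fin])
    exact abs_pos.mp ((abs_pos.mpr hJ).trans_le (hmax_all J))
  refine ⟨hdet, fun v hv => ?_⟩
  obtain ⟨x, ⟨hx0, hxv⟩, huniq⟩ :=
    existsUnique_mulVec_eq_zero_and_eq_off_range A hI hdet v
  have hcount : ∑ j, |(Set.range I)ᶜ.indicator x j| = (n : ℝ) - k := by
    have habs : ∀ j, |(Set.range I)ᶜ.indicator x j| = (Set.range I)ᶜ.indicator 1 j := by
      intro j
      by_cases hj : j ∈ Set.range I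
      · simp [hj]
      · rcases hv j hj with h | h <;> simp [hj, hxv j hj, h]
    have hrange : ∑ j, (Set.range I).indicator (1 : Fin n → ℝ) j = k :=
      (Fintype.sum_of_injective I hI (fun _ => 1) _ (fun j hj => Set.indicator_of_notMem hj _)
        fun i => by simp).symm.trans (by simp)
    simp_rw [habs, Set.indicator_compl, Pi.sub_apply, sum_sub_distrib, hrange]
    simp
  refine ⟨x, ⟨hx0, hxv⟩, ?_, fun x' hx'0 hx'v => huniq x' ⟨hx'0, hx'v⟩⟩
  rintro _ ⟨i, rfl⟩
  exact hcount ▸ abs_apply_le_of_mulVec_eq_zero A hI hdet hmax_all hx0 i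

theorem stmt18 (k n : ℕ) (hkn : k ≤ n) (A : Matrix (Fin k) (Fin n) ℝ)
    (hrank : A.rank = k)
    (I : Fin k → Fin n) (hI : Function.Injective I)
    (hmax : ∀ J : Fin k → Fin n, Function.Injective J →
      |(A.submatrix id J).det| ≤ |(A.submatrix id I).det|) :
    (A.submatrix id I).det ≠ 0 ∧
    ∀ v : Fin n → ℝ, (∀ i : Fin n, i ∉ Set.range I → v i = 1 ∨ v i = -1) →
      ∃ x : Fin n → ℝ,
        (A.mulVec x = 0 ∧ ∀ i : Fin n, i ∉ Set.range I → x i = v i) ∧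
        (∀ i ∈ Set.range I, |x i| ≤ (n : ℝ) - k) ∧
        ∀ x' : Fin n → ℝ, A.mulVec x' = 0 →
          (∀ i : Fin n, i ∉ Set.range I → x' i = v i) → x' = x :=
  stmt18_general k n A hrank I hI hmax
end
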